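/- Let H₁,...,H_m be mutually unbiased Hadamard matrices of order n over the rationals, let p be a prime dividing √n, and reduce the matrices modulo p to matrices over F_q (q = p^r). Then for any nonzero elements X, Y of the F_q-matrix algebra generated by the reductions of H₁,...,H_m, and nonzero α_x, α_y ∈ F_q, the row spaces of N_x = [X | α_x I_n] and N_y = [Y | α_y I_n] satisfy: the row space of N_x intersects the dual of the row space of N_y trivially. Hence the set of all such row spaces is an LCD subspace code in F_q^{2n}. -/

import Mathlib

open Matrix

/-- The Euclidean dual of a linear code `C ⊆ F^ι`:
all vectors orthogonal (w.r.t. the standard bilinear form) to every codeword. -/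
def dualCode (F : Type*) [Field F] {ι : Type*} [Fintype ι]
    (C : Submodule F (ι → F)) : Submodule F (ι → F) where
  carrier := {v | ∀ c ∈ C, v ⬝ᵥ c = 0}
  add_mem' := by
    intro a b ha hb c hc
    simp [add_dotProduct, ha c hc, hb c hc]
  zero_mem' := by intro c hc; simp
  smul_mem' := by
    intro r a ha c hc
    simp [smul_dotProduct, ha c hc]

/-- The row space of a matrix: the span of its rows. -/
def rowSpace (F : Type*) [Field F] {κ ι : Type*} (G : Matrix κ ι F) :
    Submodule F (ι → F) := Submodule.span F (Set.range fun k => G k)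

/-!
Over `F` every product `Hᵢ Hⱼᵀ` vanishes, being `n • 1` or `s • L` with `p ∣ s ∣ n`; by
bilinearity the non-unital algebra generated by the reductions satisfies `X Yᵀ = 0`. Hence
`N_x N_yᵀ = αx αy • 1` is invertible, and a vector `u N_x` orthogonal to every row of `N_y`
satisfies `u (N_x N_yᵀ) = 0`, so `u = 0`.
-/

section RowSpace

variable {F : Type*} [Field F] {κ ι : Type*} [Fintype κ]

theorem mem_rowSpace_iff (A : Matrix κ ι F) (v : ι → F) :
    v ∈ rowSpace F A ↔ ∃ u, u ᵥ* A = v := by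
  simp only [rowSpace, Submodule.mem_span_range_iff_exists_fun, vecMul_eq_sum]

variable [Fintype ι]

theorem mem_dualCode_rowSpace_iff (B : Matrix κ ι F) (v : ι → F) :
    v ∈ dualCode F (rowSpace F B) ↔ B *ᵥ v = 0 := by
  constructor
  · intro hv
    ext l
    rw [mulVec, dotProduct_comm]
    exact hv (B l) (Submodule.subset_span ⟨l, rfl⟩)
  · intro hBv c hc
    obtain ⟨u, rfl⟩ := (mem_rowSpace_iff B c).1 hc
    rw [dotProduct_comm, ← dotProduct_mulVec, hBv, dotProduct_zero]

theorem rowSpace_inf_dualCode_rowSpace_eq_bot [DecidableEq κ] (A B : Matrix κ ι F)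
    (hAB : IsUnit (A * Bᵀ)) : rowSpace F A ⊓ dualCode F (rowSpace F B) = ⊥ := by
  refine (Submodule.eq_bot_iff _).2 fun v hv => ?_
  obtain ⟨hvA, hvB⟩ := Submodule.mem_inf.1 hv
  obtain ⟨u, rfl⟩ := (mem_rowSpace_iff A v).1 hvA
  rw [mem_dualCode_rowSpace_iff, ← vecMul_transpose, vecMul_vecMul] at hvB
  have hu : u = 0 :=
    vecMul_injective_iff_isUnit.2 hAB (hvB.trans (zero_vecMul (A * Bᵀ)).symm)
  rw [hu, zero_vecMul]

end RowSpace

theorem isUnit_fromCols_smul_one_mul_transpose {F : Type*} [Field F] {n : Type*} [Fintype n]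
    [DecidableEq n] {X Y : Matrix n n F} (hXY : X * Yᵀ = 0) {a b : F} (ha : a ≠ 0)
    (hb : b ≠ 0) :
    IsUnit (fromCols X (a • (1 : Matrix n n F)) * (fromCols Y (b • (1 : Matrix n n F)))ᵀ) := by
  rw [transpose_fromCols, fromCols_mul_fromRows, hXY, zero_add, transpose_smul,
    transpose_one, smul_mul_smul_comm, one_mul]
  simpa only [Algebra.smul_def, mul_one] using
    (mul_ne_zero ha hb).isUnit.map (algebraMap F (Matrix n n F))

theorem mul_transpose_eq_zero_of_mem_adjoin {R : Type*} [CommSemiring R] {n : Type*}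
    [Fintype n] {S : Set (Matrix n n R)} (hS : ∀ A ∈ S, ∀ B ∈ S, A * Bᵀ = 0)
    {A B : Matrix n n R} (hA : A ∈ NonUnitalAlgebra.adjoin R S)
    (hB : B ∈ NonUnitalAlgebra.adjoin R S) : A * Bᵀ = 0 := by
  induction hA, hB using NonUnitalAlgebra.adjoin_induction₂ with
  | mem_mem x y hx hy => exact hS x hx y hy
  | zero_left x hx => simp
  | zero_right x hx => simp
  | add_left x y z _ _ _ h1 h2 => rw [add_mul, h1, h2, add_zero]
  | add_right x y z _ _ _ h1 h2 => rw [transpose_add, mul_add, h1, h2, add_zero]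
  | mul_left x y z _ _ _ _ h2 => rw [mul_assoc, h2, mul_zero]
  | mul_right x y z _ _ _ _ h2 => rw [transpose_mul, ← mul_assoc, h2, zero_mul]
  | smul_left r x y _ _ h => rw [smul_mul_assoc, h, smul_zero]
  | smul_right r x y _ _ h => rw [transpose_smul, mul_smul_comm, h, smul_zero]

theorem map_intCast_mul_transpose_eq_zero {R : Type*} [Ring R] {n : Type*} [Fintype n]
    {A B L : Matrix n n ℤ} {c : ℤ} (hAB : A * Bᵀ = c • L) (hc : (c : R) = 0) :
    A.map (Int.cast : ℤ → R) * (B.map (Int.cast : ℤ → R))ᵀ = 0 := by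
  have hmap : (A * Bᵀ).map (Int.castRingHom R) = A.map Int.cast * (B.map Int.cast)ᵀ :=
    Matrix.map_mul.trans (by rw [transpose_map]; rfl)
  rw [← hmap, hAB]
  ext a b
  simp [hc]

theorem stmt12_general (F : Type*) [Field F] {p : ℕ}
    [CharP F p] {n s m : ℕ} (hs : s * s = n) (hps : p ∣ s)
    (H : Fin m → Matrix (Fin n) (Fin n) ℤ)
    (hHad : ∀ i, H i * (H i)ᵀ = (n : ℤ) • 1)
    (hunb : ∀ i j, i ≠ j → ∃ L : Matrix (Fin n) (Fin n) ℤ,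
      (∀ a b, L a b = 1 ∨ L a b = -1) ∧ L * Lᵀ = (n : ℤ) • 1 ∧
        H i * (H j)ᵀ = (s : ℤ) • L)
    (X Y : Matrix (Fin n) (Fin n) F)
    (hX : X ∈ NonUnitalAlgebra.adjoin F
      (Set.range fun i => (H i).map (Int.cast : ℤ → F)))
    (hY : Y ∈ NonUnitalAlgebra.adjoin F
      (Set.range fun i => (H i).map (Int.cast : ℤ → F)))
    (αx αy : F) (hαx : αx ≠ 0) (hαy : αy ≠ 0) :
    rowSpace F (fromCols X (αx • (1 : Matrix (Fin n) (Fin n) F))) ⊓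
      dualCode F (rowSpace F (fromCols Y (αy • (1 : Matrix (Fin n) (Fin n) F)))) = ⊥ := by
  have hsF : ((s : ℤ) : F) = 0 := by exact_mod_cast (CharP.cast_eq_zero_iff F p s).2 hps
  have hnF : ((n : ℤ) : F) = 0 := by
    rw [← hs, Nat.cast_mul, Int.cast_mul, hsF, zero_mul]
  have hgen : ∀ i j, (H i).map (Int.cast : ℤ → F) * ((H j).map (Int.cast : ℤ → F))ᵀ = 0 := by
    intro i j
    by_cases hij : i = j
    · subst hij
      exact map_intCast_mul_transpose_eq_zero (hHad i) hnF
    · obtain ⟨L, -, -, hL⟩ := hunb i j hij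
      exact map_intCast_mul_transpose_eq_zero hL hsF
  have hXY : X * Yᵀ = 0 := mul_transpose_eq_zero_of_mem_adjoin
    (by rintro _ ⟨i, rfl⟩ _ ⟨j, rfl⟩; exact hgen i j) hX hY
  exact rowSpace_inf_dualCode_rowSpace_eq_bot _ _
    (isUnit_fromCols_smul_one_mul_transpose hXY hαx hαy)

/-- Mutually unbiased Hadamard matrices of order `n`, `p ∣ √n`,
reduced mod `p`: row spaces of `[X | αx I]` for nonzero `X` in the generated
algebra and `αx ≠ 0` pairwise intersect duals trivially (an LCD subspace code). -/
theorem stmt12 (F : Type*) [Field F] [Fintype F] {p : ℕ} (hp : p.Prime)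
    [CharP F p] {n s m : ℕ} (hs : s * s = n) (hps : p ∣ s)
    (H : Fin m → Matrix (Fin n) (Fin n) ℤ)
    (hent : ∀ i a b, H i a b = 1 ∨ H i a b = -1)
    (hHad : ∀ i, H i * (H i)ᵀ = (n : ℤ) • 1)
    (hunb : ∀ i j, i ≠ j → ∃ L : Matrix (Fin n) (Fin n) ℤ,
      (∀ a b, L a b = 1 ∨ L a b = -1) ∧ L * Lᵀ = (n : ℤ) • 1 ∧
        H i * (H j)ᵀ = (s : ℤ) • L)
    (X Y : Matrix (Fin n) (Fin n) F)
    (hX : X ∈ NonUnitalAlgebra.adjoin F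
      (Set.range fun i => (H i).map (Int.cast : ℤ → F))) (hX0 : X ≠ 0)
    (hY : Y ∈ NonUnitalAlgebra.adjoin F
      (Set.range fun i => (H i).map (Int.cast : ℤ → F))) (hY0 : Y ≠ 0)
    (αx αy : F) (hαx : αx ≠ 0) (hαy : αy ≠ 0) :
    rowSpace F (fromCols X (αx • (1 : Matrix (Fin n) (Fin n) F))) ⊓
      dualCode F (rowSpace F (fromCols Y (αy • (1 : Matrix (Fin n) (Fin n) F)))) = ⊥ :=
  stmt12_general F hs hps H hHad hunb X Y hX hY αx αy hαx hαy
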